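/- The intersection kD(1+σ) ∩ kD(1+τ) is the one-dimensional k-subspace of kD spanned by [(1+σ)(1+τ)]^{2^{d-2}}; this element is nonzero and equals [(1+τ)(1+σ)]^{2^{d-2}}, and this one-dimensional subspace equals soc(kD), the sum of all simple kD-submodules of kD. -/

import Mathlib

open MonoidAlgebra

/-- The socle of a module: the sum of all simple submodules. -/
def socle (R M : Type) [Ring R] [AddCommGroup M] [Module R M] : Submodule R M :=
  sSup {S : Submodule R M | IsSimpleModule R ↥S}

open Finset
set_option linter.unusedSectionVars false
set_option maxHeartbeats 1600000

noncomputable def NN (k D : Type) [Field k] [Group D] [Fintype D] : MonoidAlgebra k D :=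
  ∑ g : D, of k D g

noncomputable def Wprod (k D : Type) [Field k] [Group D] (v : ℕ → D) : ℕ → ℕ → MonoidAlgebra k D
  | _, 0 => 1
  | s, (m+1) => (1 + of k D (v (s+m))) * Wprod k D v s m

noncomputable def wrd (k D : Type) [Field k] [Group D] (σ τ : D) : Bool → ℕ → MonoidAlgebra k D
  | _, 0 => 1
  | t, (m+1) => wrd k D σ τ (!t) m * (1 + of k D (if t then σ else τ))

variable {k : Type} [Field k] [CharP k 2] {D : Type} [Group D] [Fintype D]

lemma charA : CharP (MonoidAlgebra k D) 2 := by
  refine charP_of_injective_algebraMap (R := k) (A := MonoidAlgebra k D) ?_ 2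
  intro a b h
  have := congrArg (fun f => f.coeff (1:D)) h
  simpa [MonoidAlgebra.coe_algebraMap] using this

lemma of_mul_N (g : D) : of k D g * NN k D = NN k D := by
  rw [NN, Finset.mul_sum]
  simp_rw [← map_mul]
  exact Fintype.sum_equiv (Equiv.mulLeft g) _ _ (fun h => rfl)

lemma N_mul_of (g : D) : NN k D * of k D g = NN k D := by
  rw [NN, Finset.sum_mul]
  simp_rw [← map_mul]
  exact Fintype.sum_equiv (Equiv.mulRight g) _ _ (fun h => rfl)

lemma N_apply (h : D) : (NN k D).coeff h = 1 := by
  classical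
  rw [NN]
  rw [MonoidAlgebra.coeff_sum]
  simp [MonoidAlgebra.of_apply, Finsupp.single_apply]

lemma N_ne_zero : NN k D ≠ 0 := by
  intro h
  have := congrArg (fun f => f.coeff (1:D)) h
  simp [N_apply] at this

lemma lfix (v : MonoidAlgebra k D) (h : ∀ g : D, of k D g * v = v) :
    v = v.coeff 1 • NN k D := by
  have hc : ∀ g : D, v.coeff g = v.coeff 1 := by
    intro g
    conv_lhs => rw [← h g]
    rw [MonoidAlgebra.of_apply, MonoidAlgebra.coeff_single_mul_apply]
    simp
  ext h'
  rw [MonoidAlgebra.coeff_smul_apply, N_apply, smul_eq_mul, mul_one, hc h']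

lemma rfix (v : MonoidAlgebra k D) (h : ∀ g : D, v * of k D g = v) :
    v = v.coeff 1 • NN k D := by
  have hc : ∀ g : D, v.coeff g = v.coeff 1 := by
    intro g
    conv_lhs => rw [← h g]
    rw [MonoidAlgebra.of_apply, MonoidAlgebra.coeff_mul_single_apply]
    simp
  ext h'
  rw [MonoidAlgebra.coeff_smul_apply, N_apply, smul_eq_mul, mul_one, hc h']

lemma rall (σ τ : D) (hgen : Subgroup.closure {σ, τ} = ⊤) (v : MonoidAlgebra k D)
    (h1 : v * of k D σ = v) (h2 : v * of k D τ = v) : ∀ g : D, v * of k D g = v := by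
  intro g
  let K : Subgroup D :=
    { carrier := {g | v * of k D g = v}
      one_mem' := by show _ * of k D (1:D) = _; rw [map_one, mul_one]
      mul_mem' := by
        intro a b ha hb
        simp only [Set.mem_setOf_eq] at *
        rw [map_mul, ← mul_assoc, ha, hb]
      inv_mem' := by
        intro a ha
        simp only [Set.mem_setOf_eq] at *
        conv_lhs => rw [← ha]
        rw [mul_assoc, ← map_mul, mul_inv_cancel, map_one, mul_one] }
  have hK : Subgroup.closure {σ, τ} ≤ K := by
    rw [Subgroup.closure_le]
    rintro x (rfl | rfl)
    · exact h1
    · exact h2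
  rw [hgen] at hK
  exact hK (Subgroup.mem_top g)

lemma lall (σ τ : D) (hgen : Subgroup.closure {σ, τ} = ⊤) (v : MonoidAlgebra k D)
    (h1 : of k D σ * v = v) (h2 : of k D τ * v = v) : ∀ g : D, of k D g * v = v := by
  intro g
  let K : Subgroup D :=
    { carrier := {g | of k D g * v = v}
      one_mem' := by show of k D (1:D) * _ = _; rw [map_one, one_mul]
      mul_mem' := by
        intro a b ha hb
        simp only [Set.mem_setOf_eq] at *
        rw [map_mul, mul_assoc, hb, ha]
      inv_mem' := by
        intro a ha
        simp only [Set.mem_setOf_eq] at *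
        conv_lhs => rw [← ha]
        rw [← mul_assoc, ← map_mul, inv_mul_cancel, map_one, one_mul] }
  have hK : Subgroup.closure {σ, τ} ≤ K := by
    rw [Subgroup.closure_le]
    rintro x (rfl | rfl)
    · exact h1
    · exact h2
  rw [hgen] at hK
  exact hK (Subgroup.mem_top g)

lemma key_group (σ τ : D) (hσ : σ ^ 2 = 1) (hτ : τ ^ 2 = 1) :
    (σ * τ) * τ = σ ∧ τ * (σ * τ) = (σ * τ)⁻¹ * τ ∧ τ * (σ * τ)⁻¹ = (σ * τ) * τ := by
  have hσ' : σ * σ = 1 := by rw [← pow_two]; exact hσ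
  have hτ' : τ * τ = 1 := by rw [← pow_two]; exact hτ
  have hinv : (σ * τ)⁻¹ = τ * σ := by
    rw [mul_inv_rev, inv_eq_of_mul_eq_one_left hτ', inv_eq_of_mul_eq_one_left hσ']
  refine ⟨by rw [mul_assoc, hτ', mul_one], by rw [hinv, mul_assoc], ?_⟩
  rw [hinv, ← mul_assoc, hτ', one_mul, mul_assoc, hτ', mul_one]

lemma N_eq (e : ℕ) (u τ' : D) (hord : orderOf u = 2^(e+1))
    (hcard : Fintype.card D = 2^(e+2)) (hτn : τ' ∉ Subgroup.zpowers u) :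
    NN k D = ∑ i ∈ Finset.range (2^(e+1)), (of k D (u^i) + of k D (u^i * τ')) := by
  classical
  set M := 2^(e+1) with hM
  have inj1 : Set.InjOn (fun i : ℕ => u ^ i) ↑(range M) := by
    intro i hi j hj h
    simp only [coe_range, Set.mem_Iio] at hi hj
    exact pow_injOn_Iio_orderOf (by rw [hord]; exact hi) (by rw [hord]; exact hj) h
  have inj2 : Set.InjOn (fun i : ℕ => u ^ i * τ') ↑(range M) := by
    intro i hi j hj h
    exact inj1 hi hj (mul_right_cancel (h : u ^ i * τ' = u ^ j * τ'))
  set S1 := (range M).image (fun i : ℕ => u ^ i) with hS1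
  set S2 := (range M).image (fun i : ℕ => u ^ i * τ') with hS2
  have disj : Disjoint S1 S2 := by
    rw [Finset.disjoint_left]
    rintro g hg1 hg2
    simp only [hS1, hS2, Finset.mem_image, Finset.mem_range] at hg1 hg2
    obtain ⟨i, _, rfl⟩ := hg1
    obtain ⟨j, _, hj⟩ := hg2
    refine hτn ⟨(i : ℤ) - j, ?_⟩
    have : τ' = (u ^ j)⁻¹ * u ^ i := by rw [← hj, inv_mul_cancel_left]
    show u ^ ((i:ℤ) - j) = τ'
    rw [this, zpow_sub, zpow_natCast, zpow_natCast]
    exact ((Commute.refl u).pow_pow i j).inv_right.eq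
  have hcup : S1 ∪ S2 = Finset.univ := by
    apply Finset.eq_univ_of_card
    rw [Finset.card_union_of_disjoint disj, hS1, hS2,
      Finset.card_image_of_injOn inj1, Finset.card_image_of_injOn inj2, Finset.card_range,
      hcard, hM]
    ring
  rw [NN, ← hcup, Finset.sum_union disj, hS1, hS2,
    Finset.sum_image (fun i hi j hj h => inj1 hi hj h),
    Finset.sum_image (fun i hi j hj h => inj2 hi hj h), ← Finset.sum_add_distrib]

lemma key (σ τ : D) (e : ℕ) (hσ : σ ^ 2 = 1) (hτ : τ ^ 2 = 1)
    (hst : orderOf (σ * τ) = 2 ^ (e + 1))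
    (hgen : Subgroup.closure {σ, τ} = ⊤)
    (hcard : Fintype.card D = 2 ^ (e + 2)) :
    ((1 + of k D σ) * (1 + of k D τ)) ^ 2 ^ e = NN k D := by
  haveI : CharP (MonoidAlgebra k D) 2 := charA
  haveI : Fact (Nat.Prime 2) := ⟨Nat.prime_two⟩
  obtain ⟨huτ, hτu, hτu'⟩ := key_group σ τ hσ hτ
  set u := σ * τ with hu
  set A := MonoidAlgebra k D with hA
  set oo := of k D with hoo
  -- basic
  have hu1 : u ^ (2^(e+1)) = 1 := by rw [← hst]; exact pow_orderOf_eq_one u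
  set v : ℕ → D := fun j => (u⁻¹)^j * τ with hv
  have hv0 : v 0 = τ := by simp [hv]
  have hvu : ∀ j, v j * u = v (j+1) := by
    intro j
    show ((u⁻¹)^j * τ) * u = (u⁻¹)^(j+1) * τ
    rw [mul_assoc, hτu, ← mul_assoc, ← pow_succ]
  have huv : ∀ j, u * v (j+1) = v j := by
    intro j
    show u * ((u⁻¹)^(j+1) * τ) = (u⁻¹)^j * τ
    rw [← mul_assoc, pow_succ', ← mul_assoc, mul_inv_cancel, one_mul]
  have comm : ∀ j, (1 + oo (v j)) * (1 + oo u) = (1 + oo u) * (1 + oo (v (j+1))) := by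
    intro j
    have h1 : oo (v j) * oo u = oo (v (j+1)) := by rw [hoo, ← map_mul, hvu]
    have h2 : oo u * oo (v (j+1)) = oo (v j) := by rw [hoo, ← map_mul, huv]
    simp only [mul_add, add_mul, one_mul, mul_one, h1, h2]
    abel
  have Wmul : ∀ s m, Wprod k D v s m * (1 + oo u) = (1 + oo u) * Wprod k D v (s+1) m := by
    intro s m
    induction m with
    | zero => simp [Wprod]
    | succ m ih =>
      show ((1 + oo (v (s+m))) * Wprod k D v s m) * _
          = _ * ((1 + oo (v (s+1+m))) * Wprod k D v (s+1) m)
      rw [mul_assoc, ih, ← mul_assoc, comm (s+m), mul_assoc, show s + m + 1 = s+1+m by omega]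
  have Wapp : ∀ s m, Wprod k D v (s+1) m * (1 + oo (v s)) = Wprod k D v s (m+1) := by
    intro s m
    induction m with
    | zero => show 1 * _ = (1 + oo (v (s+0))) * 1; rw [one_mul, mul_one, Nat.add_zero]
    | succ m ih =>
      show ((1 + oo (v (s+1+m))) * Wprod k D v (s+1) m) * _ = (1 + oo (v (s+(m+1)))) * Wprod k D v s (m+1)
      rw [mul_assoc, ih, show s+1+m = s+(m+1) by omega]
  have pow_eq : ∀ m, ((1 + oo u) * (1 + oo τ)) ^ m = (1 + oo u)^m * Wprod k D v 0 m := by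
    intro m
    induction m with
    | zero => simp [Wprod]
    | succ m ih =>
      rw [pow_succ, ih, pow_succ, ← Wapp 0 m, hv0]
      rw [mul_assoc, mul_assoc, ← mul_assoc (Wprod k D v 0 m), Wmul 0 m]
      simp only [mul_assoc]
  have c0 : Commute (oo u) (oo u⁻¹) := by
    show _ * _ = _ * _
    rw [hoo, ← map_mul, ← map_mul, mul_inv_cancel, inv_mul_cancel]
  have cu : Commute (1 + oo u) (1 + oo u⁻¹) :=
    (Commute.one_left _).add_left ((Commute.one_right _).add_right c0)
  have τcomm : ∀ j, oo τ * (1 + oo u⁻¹)^j = (1 + oo u)^j * oo τ := by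
    intro j
    induction j with
    | zero => simp
    | succ j ih =>
      rw [pow_succ, ← mul_assoc, ih, pow_succ, mul_assoc, mul_assoc]
      congr 1
      rw [mul_add, add_mul, mul_one, one_mul, hoo, ← map_mul, ← map_mul, hτu']
  have uinv_pow : ∀ j, oo ((u⁻¹)^j) * (1 + oo u)^j = (1 + oo u⁻¹)^j := by
    intro j
    induction j with
    | zero => simp
    | succ j ih =>
      rw [pow_succ' u⁻¹, hoo, map_mul, ← hoo, pow_succ, ← mul_assoc, mul_assoc (oo u⁻¹), ih,
        mul_assoc, (cu.symm.pow_left j).eq, ← mul_assoc]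
      have h3 : oo u⁻¹ * (1 + oo u) = 1 + oo u⁻¹ := by
        rw [mul_add, mul_one, hoo, ← map_mul, inv_mul_cancel, map_one, add_comm]
      rw [h3, ← pow_succ']
  have Wclosed : ∀ m, Wprod k D v 0 (m+1) = (1 + oo u⁻¹)^m * (1 + oo τ) := by
    intro m
    induction m with
    | zero =>
      show (1 + oo (v (0+0))) * 1 = (1 + oo u⁻¹)^0 * (1 + oo τ)
      rw [mul_one, pow_zero, one_mul]
      norm_num [hv0]
    | succ m ih =>
      show (1 + oo (v (0+(m+1)))) * Wprod k D v 0 (m+1) = _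
      rw [zero_add, ih]
      have hvm : oo (v (m+1)) = oo ((u⁻¹)^(m+1)) * oo τ := by
        rw [hoo, ← map_mul]
      have hττ : oo τ * (1 + oo τ) = 1 + oo τ := by
        rw [mul_add, mul_one, hoo, ← map_mul, ← pow_two, hτ, map_one, add_comm]
      have hX : oo ((u⁻¹)^(m+1)) * ((1 + oo u)^m * oo τ * (1 + oo τ))
          = oo u⁻¹ * ((1 + oo u⁻¹)^m * (1 + oo τ)) := by
        rw [mul_assoc ((1 + oo u)^m), hττ, pow_succ' u⁻¹, hoo, map_mul, ← hoo,
          mul_assoc, ← mul_assoc (oo ((u⁻¹)^m)), uinv_pow]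
      calc (1 + oo (v (m+1))) * ((1 + oo u⁻¹)^m * (1 + oo τ))
          = (1 + oo u⁻¹)^m * (1 + oo τ)
            + oo ((u⁻¹)^(m+1)) * (oo τ * ((1 + oo u⁻¹)^m * (1 + oo τ))) := by
            rw [add_mul, one_mul, hvm, mul_assoc]
        _ = (1 + oo u⁻¹)^m * (1 + oo τ)
            + oo u⁻¹ * ((1 + oo u⁻¹)^m * (1 + oo τ)) := by
            rw [← mul_assoc (oo τ), τcomm, hX]
        _ = (1 + oo u⁻¹)^(m+1) * (1 + oo τ) := by
            rw [pow_succ' (1 + oo u⁻¹), add_mul, add_mul, one_mul, mul_assoc]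
  have geom : ∀ t : ℕ, (1 + oo u)^(2^t - 1) = ∑ i ∈ Finset.range (2^t), (oo u)^i := by
    intro t
    induction t with
    | zero => simp
    | succ t ih =>
      have h2 : 2^(t+1) - 1 = 2^t + (2^t - 1) := by
        have := Nat.one_le_two_pow (n := t); omega
      have hfrob : (1 + oo u)^(2^t) = 1 + (oo u)^(2^t) := by
        have := add_pow_char_pow_of_commute (R := MonoidAlgebra k D) (p := 2) (n := t)
          (x := (1:MonoidAlgebra k D)) (y := oo u) (Commute.one_left _)
        simpa using this
      rw [h2, pow_add, ih, hfrob, add_mul, one_mul, Finset.mul_sum]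
      have hsplit : ∑ i ∈ Finset.range (2^(t+1)), (oo u)^i
          = ∑ i ∈ Finset.range (2^t), (oo u)^i
            + ∑ i ∈ Finset.range (2^t), (oo u)^(2^t + i) := by
        rw [← Finset.sum_range_add, ← Nat.two_pow_succ]
      rw [hsplit]
      congr 1
      refine Finset.sum_congr rfl fun i _ => ?_
      rw [pow_add]
  have hMone : (oo u)^(2^(e+1)) = 1 := by rw [hoo, ← map_pow, hu1, map_one]
  have shift1 : oo u * (∑ i ∈ Finset.range (2^(e+1)), (oo u)^i)
      = ∑ i ∈ Finset.range (2^(e+1)), (oo u)^i := by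
    rw [Finset.mul_sum]
    simp_rw [← pow_succ']
    have key2 : (∑ i ∈ Finset.range (2^(e+1)), (oo u)^(i+1)) + (oo u)^0
        = (∑ i ∈ Finset.range (2^(e+1)), (oo u)^i) + (oo u)^(2^(e+1)) := by
      rw [← Finset.sum_range_succ' (fun i => (oo u)^i) (2^(e+1)),
          Finset.sum_range_succ (fun i => (oo u)^i) (2^(e+1))]
    rw [pow_zero, hMone] at key2
    exact add_right_cancel key2
  have shiftinv : oo u⁻¹ * (∑ i ∈ Finset.range (2^(e+1)), (oo u)^i)
      = ∑ i ∈ Finset.range (2^(e+1)), (oo u)^i := by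
    conv_lhs => rw [← shift1]
    rw [← mul_assoc, hoo, ← map_mul, inv_mul_cancel, map_one, one_mul]
  have shiftpow : ∀ j, oo ((u⁻¹)^j) * (∑ i ∈ Finset.range (2^(e+1)), (oo u)^i)
      = ∑ i ∈ Finset.range (2^(e+1)), (oo u)^i := by
    intro j
    induction j with
    | zero => simp
    | succ j ih => rw [pow_succ' u⁻¹, hoo, map_mul, ← hoo, mul_assoc, ih, shiftinv]
  have hab : (1 + oo σ) * (1 + oo τ) = (1 + oo u) * (1 + oo τ) := by
    have h1 : oo σ * oo τ = oo u := by rw [hoo, ← map_mul]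
    have h2 : oo u * oo τ = oo σ := by rw [hoo, ← map_mul, huτ]
    simp only [mul_add, add_mul, one_mul, mul_one, h1, h2]
    abel
  have sq2 : (1 + oo u) * (1 + oo u⁻¹) = oo u⁻¹ * (1 + oo u)^2 := by
    have hffrob : (1 + oo u)^2 = 1 + (oo u)^2 := by
      have := add_pow_char_of_commute (R := MonoidAlgebra k D) (p := 2)
        (x := (1:MonoidAlgebra k D)) (y := oo u) (Commute.one_left _)
      simpa using this
    have hu2 : u⁻¹ * u^2 = u := by rw [pow_two, ← mul_assoc, inv_mul_cancel, one_mul]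
    rw [hffrob, mul_add, mul_one, add_mul, one_mul, mul_add, mul_one, hoo, ← map_mul,
      mul_inv_cancel, map_one, ← map_pow, ← map_mul, hu2, ← hoo]
    have h2z : (1 + oo u + (oo u⁻¹ + 1) : MonoidAlgebra k D)
        = (oo u⁻¹ + oo u) + (1 + 1) := by abel
    rw [h2z, CharTwo.add_self_eq_zero, add_zero]
  have cum : Commute (oo u⁻¹) ((1 + oo u)^2) :=
    ((Commute.one_right _).add_right c0.symm).pow_right 2
  have c1m : ∀ j : ℕ, Commute (1 + oo u) (oo ((u⁻¹)^j)) := by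
    intro j
    rw [hoo, map_pow, ← hoo]
    exact ((Commute.one_left _).add_left c0).pow_right j
  have mid : ∀ mm : ℕ, (1 + oo u)^(mm+1) * (1 + oo u⁻¹)^mm
      = oo ((u⁻¹)^mm) * (1 + oo u)^(2*mm+1) := by
    intro mm
    rw [pow_succ' (1 + oo u), mul_assoc, ← Commute.mul_pow cu, sq2, Commute.mul_pow cum,
      ← pow_mul, ← map_pow, ← mul_assoc, (c1m mm).eq, mul_assoc, ← pow_succ']
  have hτn : τ ∉ Subgroup.zpowers u := by
    intro hmem
    have hσmem : σ ∈ Subgroup.zpowers u := by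
      rw [← huτ]; exact mul_mem (Subgroup.mem_zpowers u) hmem
    have hle : (⊤ : Subgroup D) ≤ Subgroup.zpowers u := by
      rw [← hgen, Subgroup.closure_le]
      rintro x (rfl | rfl)
      · exact hσmem
      · exact hmem
    have heq : Subgroup.zpowers u = ⊤ := top_le_iff.mp hle
    have h1 : Nat.card (Subgroup.zpowers u) = 2^(e+1) := by rw [Nat.card_zpowers, hst]
    have h2 : Nat.card (Subgroup.zpowers u) = 2^(e+2) := by
      rw [heq, Subgroup.card_top, Nat.card_eq_fintype_card, hcard]
    have h3 : (2:ℕ)^(e+2) = 2 * 2^(e+1) := by ring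
    have h4 : (1:ℕ) ≤ 2^(e+1) := Nat.one_le_two_pow
    omega
  obtain ⟨m', hm'⟩ : ∃ m', 2^e = m' + 1 :=
    ⟨2^e - 1, by have := Nat.one_le_two_pow (n := e); omega⟩
  have h2m : 2*m'+1 = 2^(e+1) - 1 := by
    have : (2:ℕ)^(e+1) = 2 * 2^e := by ring
    omega
  have final : (∑ i ∈ Finset.range (2^(e+1)), (oo u)^i) * (1 + oo τ) = NN k D := by
    rw [N_eq e u τ hst hcard hτn, Finset.sum_mul]
    refine Finset.sum_congr rfl fun i _ => ?_
    rw [mul_add, mul_one, ← map_pow, hoo, ← map_mul]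
  calc ((1 + oo σ) * (1 + oo τ)) ^ 2^e
      = (1 + oo u)^(m'+1) * Wprod k D v 0 (m'+1) := by rw [hab, pow_eq, hm']
    _ = ((1 + oo u)^(m'+1) * (1 + oo u⁻¹)^m') * (1 + oo τ) := by
        rw [Wclosed m', mul_assoc]
    _ = oo ((u⁻¹)^m') * ((1 + oo u)^(2*m'+1) * (1 + oo τ)) := by rw [mid m', mul_assoc]
    _ = oo ((u⁻¹)^m') * ((∑ i ∈ Finset.range (2^(e+1)), (oo u)^i) * (1 + oo τ)) := by
        rw [h2m, geom (e+1)]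
    _ = NN k D := by
        rw [← mul_assoc, shiftpow m', final]

lemma sq_letter (ν : D) (hν : ν^2 = 1) : (1 + of k D ν) * (1 + of k D ν) = 0 := by
  haveI : CharP (MonoidAlgebra k D) 2 := charA
  have h1 : of k D ν * of k D ν = 1 := by rw [← map_mul, ← pow_two, hν, map_one]
  rw [mul_add, mul_one, add_mul, one_mul, h1]
  have h2 : (1 + of k D ν + (of k D ν + 1) : MonoidAlgebra k D)
      = (1 + 1) + (of k D ν + of k D ν) := by abel
  rw [h2, CharTwo.add_self_eq_zero, CharTwo.add_self_eq_zero, add_zero]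

lemma fix_of_mul_eq_zero {y : MonoidAlgebra k D} {ν : D}
    (h : y * (1 + of k D ν) = 0) : y * of k D ν = y := by
  haveI : CharP (MonoidAlgebra k D) 2 := charA
  rw [mul_add, mul_one] at h
  have h2 : y * of k D ν = -y := eq_neg_of_add_eq_zero_right h
  rw [h2, CharTwo.neg_eq]

lemma wrd_even (σ τ : D) : ∀ j : ℕ,
    wrd k D σ τ true (2*j) = ((1 + of k D τ) * (1 + of k D σ))^j ∧
    wrd k D σ τ false (2*j) = ((1 + of k D σ) * (1 + of k D τ))^j := by
  intro j
  induction j with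
  | zero => constructor <;> simp [wrd]
  | succ j ih =>
    have e1 : 2*(j+1) = (2*j + 1) + 1 := by omega
    have ha : wrd k D σ τ true (2*j+1+1) = wrd k D σ τ false (2*j+1) * (1 + of k D σ) := rfl
    have hb : wrd k D σ τ false (2*j+1) = wrd k D σ τ true (2*j) * (1 + of k D τ) := rfl
    have hc : wrd k D σ τ false (2*j+1+1) = wrd k D σ τ true (2*j+1) * (1 + of k D τ) := rfl
    have hd : wrd k D σ τ true (2*j+1) = wrd k D σ τ false (2*j) * (1 + of k D σ) := rfl
    constructor
    · rw [e1, ha, hb, ih.1, mul_assoc, ← pow_succ]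
    · rw [e1, hc, hd, ih.2, mul_assoc, ← pow_succ]

lemma Qlem (σ τ : D) (hσ : σ ^ 2 = 1) (hτ : τ ^ 2 = 1)
    (hgen : Subgroup.closure {σ, τ} = ⊤) :
    ∀ m (T : Submodule (MonoidAlgebra k D) (MonoidAlgebra k D)),
      IsSimpleModule (MonoidAlgebra k D) T →
      (∀ t : Bool, ∀ v ∈ T, v * wrd k D σ τ t m = 0) →
      ∀ v ∈ T, ∃ c : k, v = c • NN k D := by
  intro m
  induction m with
  | zero =>
    intro T hT h0 v hv
    exfalso
    haveI := hT
    have hTbot : ∀ w ∈ T, w = 0 := fun w hw => by simpa [wrd] using h0 true w hw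
    obtain ⟨⟨x, hx⟩, ⟨y, hy⟩, hxy⟩ := IsSimpleModule.nontrivial (MonoidAlgebra k D) T
    exact hxy (Subtype.ext (show x = y by rw [hTbot x hx, hTbot y hy]))
  | succ m ih =>
    intro T hT h1
    by_cases hall : ∀ t : Bool, ∀ v ∈ T, v * wrd k D σ τ t m = 0
    · exact ih T hT hall
    · push_neg at hall
      obtain ⟨t₀, v₀, hv₀T, hv₀⟩ := hall
      set w := wrd k D σ τ t₀ m with hw
      have hkill : ∀ v ∈ T, ∀ t' : Bool,
          v * (w * (1 + of k D (if t' then σ else τ))) = 0 := by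
        intro v hv t'
        by_cases ht' : t' = t₀
        · subst ht'
          cases m with
          | zero =>
            have h2 : wrd k D σ τ t' 1 = 1 * (1 + of k D (if t' then σ else τ)) := rfl
            have := h1 t' v hv
            rw [h2, one_mul] at this
            rw [hw]
            show v * ((1:MonoidAlgebra k D) * _) = 0
            rwa [one_mul]
          | succ m' =>
            rw [hw]
            have h2 : wrd k D σ τ t' (m'+1)
                = wrd k D σ τ (!t') m' * (1 + of k D (if t' then σ else τ)) := rfl
            rw [h2, mul_assoc, sq_letter _ (by cases t' <;> simp [hσ, hτ]), mul_zero, mul_zero]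
        · have htt : (!t') = t₀ := by
            cases t' <;> cases t₀ <;> simp_all
          have h2 : w * (1 + of k D (if t' then σ else τ)) = wrd k D σ τ t' (m+1) := by
            rw [hw, ← htt]; rfl
          rw [h2]
          exact h1 t' v hv
      have hfixall : ∀ v ∈ T, ∀ g : D, (v * w) * of k D g = v * w := by
        intro v hv
        refine rall σ τ hgen (v * w) ?_ ?_
        · have := hkill v hv true
          rw [← mul_assoc] at this
          exact fix_of_mul_eq_zero (by simpa using this)
        · have := hkill v hv false
          rw [← mul_assoc] at this
          exact fix_of_mul_eq_zero (by simpa using this)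
      have hNform : ∀ v ∈ T, v * w = (v * w).coeff 1 • NN k D :=
        fun v hv => rfix _ (hfixall v hv)
      let F : T →ₗ[MonoidAlgebra k D] MonoidAlgebra k D :=
        { toFun := fun x => (x : MonoidAlgebra k D) * w
          map_add' := fun x y => by simp [add_mul]
          map_smul' := fun r x => by simp [smul_eq_mul, mul_assoc] }
      haveI := hT
      have hker : LinearMap.ker F = ⊥ := by
        rcases eq_bot_or_eq_top (LinearMap.ker F) with h | h
        · exact h
        · exfalso
          have hmem : (⟨v₀, hv₀T⟩ : T) ∈ LinearMap.ker F := by rw [h]; trivial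
          exact hv₀ (by simpa [F] using hmem)
      have hinj : Function.Injective F := LinearMap.ker_eq_bot.mp hker
      intro v hv
      have hfixv : ∀ g : D, of k D g * v = v := by
        intro g
        have hFg : F (of k D g • ⟨v, hv⟩) = F ⟨v, hv⟩ := by
          show (of k D g * v) * w = v * w
          rw [mul_assoc, hNform v hv, mul_smul_comm, of_mul_N, ← hNform v hv]
        have h3 := Subtype.ext_iff.mp (hinj hFg)
        simpa using h3
      exact ⟨v.coeff 1, lfix v hfixv⟩

lemma mul_N (x : MonoidAlgebra k D) : ∃ c : k, x * NN k D = c • NN k D := by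
  classical
  refine ⟨∑ g ∈ x.coeff.support, x.coeff g, ?_⟩
  conv_lhs => rw [← MonoidAlgebra.sum_coeff_single x]
  rw [Finsupp.sum, Finset.sum_mul, Finset.sum_smul]
  refine Finset.sum_congr rfl fun g _ => ?_
  have h1 : (MonoidAlgebra.single g (x.coeff g) : MonoidAlgebra k D) = (x.coeff g) • of k D g := by
    rw [MonoidAlgebra.of_apply, MonoidAlgebra.smul_single, smul_eq_mul, mul_one]
  rw [h1, smul_mul_assoc, of_mul_N]

lemma mem_spanN_iff (x : MonoidAlgebra k D) :
    x ∈ (Ideal.span {NN k D} : Ideal (MonoidAlgebra k D)) ↔ ∃ c : k, x = c • NN k D := by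
  rw [Ideal.span, Submodule.mem_span_singleton]
  constructor
  · rintro ⟨r, rfl⟩
    obtain ⟨c, hc⟩ := mul_N (k := k) (D := D) r
    rw [smul_eq_mul]
    exact ⟨c, hc⟩
  · rintro ⟨c, rfl⟩
    refine ⟨algebraMap k _ c, ?_⟩
    rw [smul_eq_mul, ← Algebra.smul_def]

lemma simpleN : IsSimpleModule (MonoidAlgebra k D)
    ↥(Ideal.span {NN k D} : Ideal (MonoidAlgebra k D)) := by
  have hmemN : NN k D ∈ (Ideal.span {NN k D} : Ideal (MonoidAlgebra k D)) :=
    Submodule.mem_span_singleton_self _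
  haveI : Nontrivial
      (Submodule (MonoidAlgebra k D) ↥(Ideal.span {NN k D} : Ideal (MonoidAlgebra k D))) := by
    apply nontrivial_of_ne ⊥ ⊤
    intro h
    have h2 : (⟨NN k D, hmemN⟩ : ↥(Ideal.span {NN k D} : Ideal (MonoidAlgebra k D)))
        ∈ (⊤ : Submodule (MonoidAlgebra k D) _) := trivial
    rw [← h, Submodule.mem_bot] at h2
    exact N_ne_zero (Subtype.ext_iff.mp h2)
  rw [isSimpleModule_iff]
  constructor
  intro W
  rcases eq_or_ne W ⊥ with h | h
  · left; exact h
  · right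
    obtain ⟨y, hyW, hy0⟩ := (Submodule.ne_bot_iff _).mp h
    obtain ⟨c, hc⟩ := (mem_spanN_iff _).mp y.2
    have hcne : c ≠ 0 := by
      rintro rfl
      apply hy0
      apply Subtype.ext
      rw [hc, zero_smul, ZeroMemClass.coe_zero]
    rw [eq_top_iff]
    rintro ⟨x, hxI⟩ -
    obtain ⟨c', hc'⟩ := (mem_spanN_iff _).mp hxI
    have hxy : (⟨x, hxI⟩ : ↥(Ideal.span {NN k D} : Ideal (MonoidAlgebra k D)))
        = (algebraMap k (MonoidAlgebra k D) (c' * c⁻¹)) • y := by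
      apply Subtype.ext
      show x = _
      rw [SetLike.val_smul, algebraMap_smul, hc, smul_smul, mul_assoc,
        inv_mul_cancel₀ hcne, mul_one]
      exact hc'
    rw [hxy]
    exact Submodule.smul_mem _ _ hyW

/-- `kD(1+σ) ∩ kD(1+τ)` is the one-dimensional `k`-subspace of `kD`
spanned by `[(1+σ)(1+τ)]^(2^(d-2))`; this element is nonzero, equals
`[(1+τ)(1+σ)]^(2^(d-2))`, and the subspace equals `soc(kD)`. -/
theorem stmt_1 {k : Type} [Field k] [IsAlgClosed k] [CharP k 2]
    {D : Type} [Group D] [Fintype D] (d : ℕ) (σ τ : D)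
    (hd : 3 ≤ d) (hσ : σ ^ 2 = 1) (hτ : τ ^ 2 = 1)
    (hst : orderOf (σ * τ) = 2 ^ (d - 1)) (hgen : Subgroup.closure {σ, τ} = ⊤)
    (hcard : Fintype.card D = 2 ^ d) :
    ((1 + of k D σ) * (1 + of k D τ)) ^ 2 ^ (d - 2) ≠ 0 ∧
    ((1 + of k D σ) * (1 + of k D τ)) ^ 2 ^ (d - 2)
      = ((1 + of k D τ) * (1 + of k D σ)) ^ 2 ^ (d - 2) ∧
    (Ideal.span {1 + of k D σ} ⊓ Ideal.span {1 + of k D τ} :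
        Ideal (MonoidAlgebra k D)).restrictScalars k
      = Submodule.span k {((1 + of k D σ) * (1 + of k D τ)) ^ 2 ^ (d - 2)} ∧
    (socle (MonoidAlgebra k D) (MonoidAlgebra k D)).restrictScalars k
      = Submodule.span k {((1 + of k D σ) * (1 + of k D τ)) ^ 2 ^ (d - 2)} := by
  classical
  haveI : CharP (MonoidAlgebra k D) 2 := charA
  obtain ⟨e, rfl⟩ : ∃ e, d = e + 3 := ⟨d - 3, by omega⟩
  have hd2 : e + 3 - 2 = e + 1 := by omega
  have hd1 : e + 3 - 1 = e + 2 := by omega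
  rw [hd2]
  rw [hd1] at hst
  have hτσ : τ * σ = (σ * τ)⁻¹ := by
    have hσ' : σ * σ = 1 := by rw [← pow_two]; exact hσ
    have hτ' : τ * τ = 1 := by rw [← pow_two]; exact hτ
    rw [mul_inv_rev, inv_eq_of_mul_eq_one_left hτ', inv_eq_of_mul_eq_one_left hσ']
  have hst' : orderOf (τ * σ) = 2 ^ (e + 2) := by rw [hτσ, orderOf_inv, hst]
  have hgen' : Subgroup.closure {τ, σ} = ⊤ := by rw [Set.pair_comm]; exact hgen
  have hcard' : Fintype.card D = 2 ^ ((e + 1) + 2) := hcard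
  have key1 : ((1 + of k D σ) * (1 + of k D τ)) ^ 2 ^ (e + 1) = NN k D :=
    key σ τ (e+1) hσ hτ hst hgen hcard'
  have key2 : ((1 + of k D τ) * (1 + of k D σ)) ^ 2 ^ (e + 1) = NN k D :=
    key τ σ (e+1) hτ hσ hst' hgen' hcard'
  obtain ⟨m1, hm1⟩ : ∃ m1, 2 ^ (e + 1) = m1 + 1 :=
    ⟨2 ^ (e + 1) - 1, by have := Nat.one_le_two_pow (n := e + 1); omega⟩
  -- membership of NN in both principal ideals
  have hNa : NN k D ∈ (Ideal.span {1 + of k D σ} : Ideal (MonoidAlgebra k D)) := by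
    rw [← key2, hm1, pow_succ, ← mul_assoc]
    rw [Ideal.span, Submodule.mem_span_singleton]
    exact ⟨((1 + of k D τ) * (1 + of k D σ)) ^ m1 * (1 + of k D τ), by rw [smul_eq_mul]⟩
  have hNb : NN k D ∈ (Ideal.span {1 + of k D τ} : Ideal (MonoidAlgebra k D)) := by
    rw [← key1, hm1, pow_succ, ← mul_assoc]
    rw [Ideal.span, Submodule.mem_span_singleton]
    exact ⟨((1 + of k D σ) * (1 + of k D τ)) ^ m1 * (1 + of k D σ), by rw [smul_eq_mul]⟩
  refine ⟨by rw [key1]; exact N_ne_zero, key1.trans key2.symm, ?_, ?_⟩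
  · -- ideals intersection
    ext x
    simp only [Submodule.restrictScalars_mem, Submodule.mem_inf]
    constructor
    · rintro ⟨hxa, hxb⟩
      rw [Ideal.span, Submodule.mem_span_singleton] at hxa hxb
      obtain ⟨r, hr⟩ := hxa
      obtain ⟨s, hs⟩ := hxb
      have hxσ : x * of k D σ = x := by
        rw [← hr, smul_eq_mul, mul_assoc]
        congr 1
        rw [add_mul, one_mul, ← map_mul, ← pow_two, hσ, map_one, add_comm]
      have hxτ : x * of k D τ = x := by
        rw [← hs, smul_eq_mul, mul_assoc]
        congr 1
        rw [add_mul, one_mul, ← map_mul, ← pow_two, hτ, map_one, add_comm]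
      have hx1 : x = x.coeff 1 • NN k D := rfix x (rall σ τ hgen x hxσ hxτ)
      rw [Submodule.mem_span_singleton]
      exact ⟨x.coeff 1, by rw [key1]; exact hx1.symm⟩
    · intro hx
      rw [Submodule.mem_span_singleton] at hx
      obtain ⟨c, hc⟩ := hx
      rw [key1] at hc
      constructor
      · rw [← hc, ← algebraMap_smul (MonoidAlgebra k D) c (NN k D)]
        exact Submodule.smul_mem _ _ hNa
      · rw [← hc, ← algebraMap_smul (MonoidAlgebra k D) c (NN k D)]
        exact Submodule.smul_mem _ _ hNb
  · -- socle
    have hwords : ∀ (S : Submodule (MonoidAlgebra k D) (MonoidAlgebra k D)),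
        ∀ t : Bool, ∀ v ∈ S, v * wrd k D σ τ t (2 ^ (e + 2) + 1) = 0 := by
      intro S t v hv
      have h2e : 2 ^ (e + 2) = 2 * 2 ^ (e + 1) := by ring
      have hwt : ∀ t' : Bool, wrd k D σ τ t' (2 ^ (e + 2)) = NN k D := by
        intro t'
        cases t'
        · rw [h2e, (wrd_even σ τ (2 ^ (e + 1))).2, key1]
        · rw [h2e, (wrd_even σ τ (2 ^ (e + 1))).1, key2]
      have hstep : wrd k D σ τ t (2 ^ (e + 2) + 1)
          = wrd k D σ τ (!t) (2 ^ (e + 2)) * (1 + of k D (if t then σ else τ)) := rfl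
      rw [hstep, hwt, mul_add, mul_one, N_mul_of, CharTwo.add_self_eq_zero, mul_zero]
    have hle : socle (MonoidAlgebra k D) (MonoidAlgebra k D)
        ≤ (Ideal.span {NN k D} : Ideal (MonoidAlgebra k D)) := by
      apply sSup_le
      rintro S hS
      intro y hy
      obtain ⟨c, hc⟩ := Qlem σ τ hσ hτ hgen (2 ^ (e + 2) + 1) S hS (hwords S) y hy
      rw [mem_spanN_iff]
      exact ⟨c, hc⟩
    apply le_antisymm
    · intro x hx
      rw [Submodule.restrictScalars_mem] at hx
      have hx2 := (mem_spanN_iff x).mp (hle hx)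
      obtain ⟨c, hc⟩ := hx2
      rw [Submodule.mem_span_singleton]
      exact ⟨c, by rw [key1]; exact hc.symm⟩
    · intro x hx
      rw [Submodule.mem_span_singleton] at hx
      obtain ⟨c, hc⟩ := hx
      rw [key1] at hc
      rw [Submodule.restrictScalars_mem]
      have hNmem : NN k D ∈ socle (MonoidAlgebra k D) (MonoidAlgebra k D) := by
        have hsub : (Ideal.span {NN k D} : Ideal (MonoidAlgebra k D))
            ≤ socle (MonoidAlgebra k D) (MonoidAlgebra k D) :=
          le_sSup (by exact simpleN)
        exact hsub (Submodule.mem_span_singleton_self _)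
      rw [← hc, ← algebraMap_smul (MonoidAlgebra k D) c (NN k D)]
      exact Submodule.smul_mem _ _ hNmem
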